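/- Let q be a prime power, n ≥ 2, let A_1, ..., A_n be F_q-affine hyperplanes of F_{q^n} in general position, S = ∩_{i=1}^n (F_{q^n} \ A_i), and let χ be a nontrivial multiplicative character of F_{q^n}. Then |∑_{x ∈ S} χ(x)| ≤ ∑_{i=0}^{n-1} C(n,i) · q^{min(i, n/2)}. -/

import Mathlib

open scoped Classical BigOperators

noncomputable section

/-- `A ⊆ F` is an `K`-affine subspace of dimension `t`: a coset `u + V` of a
`t`-dimensional `K`-linear subspace `V`. -/
def IsAffineSubspaceOfDim (K : Type*) {F : Type*} [Field K] [Field F] [Algebra K F]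
    (t : ℕ) (A : Set F) : Prop :=
  ∃ (u : F) (V : Submodule K F), Module.finrank K ↥V = t ∧ A = {x | x - u ∈ V}

/-- A family of `n` affine hyperplanes in general position: any `k ≥ 1` of them
intersect in an affine space of dimension `n - k`. -/
def InGeneralPosition (K : Type*) {F : Type*} [Field K] [Field F] [Algebra K F]
    (n : ℕ) (A : Fin n → Set F) : Prop :=
  ∀ s : Finset (Fin n), s.Nonempty →
    IsAffineSubspaceOfDim K (n - s.card) (⋂ i ∈ s, A i)

/-- `x` is a primitive element of the finite field `F`, i.e. a generator of `Fˣ`. -/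
def IsPrimitive {F : Type*} [Field F] [Fintype F] (x : F) : Prop :=
  orderOf x = Fintype.card F - 1

/-- `W t`: the number of squarefree divisors of `t`. -/
def sqfDivisors (t : ℕ) : ℕ := (t.divisors.filter Squarefree).card

/-- `δ(q, n) = ∑_{i=0}^{n-1} C(n,i) q^{min(i, n/2)}`. -/
def deltaQN (q n : ℕ) : ℝ :=
  ∑ i ∈ Finset.range n, (n.choose i : ℝ) * (q : ℝ) ^ (min (i : ℝ) ((n : ℝ) / 2))

/-!
Inclusion–exclusion writes the sum over `⋂ i, (A i)ᶜ` as an alternating sum, over sets `t` of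
indices, of the sums of `χ` over the affine spaces `⋂ i ∈ t, A i` of dimension `n - #t`; for
`t = ∅` this is the sum over all of `F`, which vanishes. The sum over a coset `u + V` is at most
`#V = q ^ (n - #t)` trivially, and at most `√(q ^ n)` by expanding `χ` in additive characters,
`χ x · G(χ⁻¹, ψ) = ∑ b, χ⁻¹ b · ψ (b x)`: the Gauss sum has absolute value `√(q ^ n)`, while
`∑ v ∈ V, ψ (b v)` is `#V` or `0` and these sums add up to `q ^ n` over `b`.
-/

lemma MulChar.norm_apply_le_one {M : Type*} [CommMonoid M] [Finite Mˣ] (χ : MulChar M ℂ)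
    (a : M) : ‖χ a‖ ≤ 1 := by
  by_cases ha : IsUnit a
  · obtain ⟨u, rfl⟩ := ha
    exact ((χ.toMonoidHom.comp (Units.coeHom M)).isOfFinOrder
      (isOfFinOrder_of_finite u)).norm_eq_one.le
  · simp [χ.map_nonunit ha]

lemma AddChar.ofReal_norm_sum_addSubgroup {G : Type*} [AddGroup G] [Fintype G]
    (φ : AddChar G ℂ) (V : AddSubgroup G) : ((‖∑ v : V, φ v‖ : ℝ) : ℂ) = ∑ v : V, φ v := by
  change ((‖∑ v, φ.compAddMonoidHom V.subtype v‖ : ℝ) : ℂ) = ∑ v, φ.compAddMonoidHom V.subtype v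
  rw [AddChar.sum_eq_ite]
  split_ifs <;> simp

lemma Finset.sum_filter_sub_mem_eq_sum_addSubgroup {G M : Type*} [AddGroup G] [Fintype G]
    [AddCommMonoid M] (V : AddSubgroup G) (u : G) (f : G → M) :
    ∑ x ∈ univ.filter (fun x => x - u ∈ V), f x = ∑ v : V, f (v + u) := by
  rw [Finset.sum_subtype (p := fun x => x - u ∈ V) _ (by simp) f]
  exact Fintype.sum_equiv ((Equiv.subRight u).subtypeEquiv fun x => Iff.rfl) _ _ fun x => by
    simp

lemma Finset.sum_powerset_filter_nonempty_apply_card_sub {ι M : Type*} [AddCommMonoid M]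
    (s : Finset ι) (f : ℕ → M) :
    ∑ t ∈ s.powerset with t.Nonempty, f (s.card - t.card)
      = ∑ i ∈ range s.card, s.card.choose i • f i := by
  have hcard (t : Finset ι) : (if t.Nonempty then f (s.card - t.card) else 0)
      = if t.card = 0 then 0 else f (s.card - t.card) := by
    simp [Finset.nonempty_iff_ne_empty]
  rw [Finset.sum_filter]
  simp_rw [hcard]
  rw [Finset.sum_powerset_apply_card (fun k => if k = 0 then 0 else f (s.card - k)),
    ← Finset.sum_range_reflect, Finset.sum_range_succ]
  simp only [add_tsub_cancel_right, tsub_self, if_true, smul_zero, add_zero]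
  refine Finset.sum_congr rfl fun i hi => ?_
  have hi : i < s.card := Finset.mem_range.mp hi
  rw [if_neg (by omega), Nat.choose_symm (by omega), Nat.sub_sub_self (by omega)]

section FiniteField

variable {F : Type*} [Field F] [Fintype F]

lemma norm_gaussSum_eq_sqrt_card {χ : MulChar F ℂ} (hχ : χ ≠ 1) {ψ : AddChar F ℂ}
    (hψ : ψ.IsPrimitive) : ‖gaussSum χ ψ‖ = √(Fintype.card F) := by
  have hsq : (‖gaussSum χ ψ‖ ^ 2 : ℝ) = Fintype.card F := by
    have h := gaussSum_mul_gaussSum_eq_card hχ hψ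
    rw [← star_gaussSum_eq, RCLike.star_def, RCLike.mul_conj] at h
    exact Complex.ofReal_injective (by push_cast; exact h)
  rw [← hsq, Real.sqrt_sq (norm_nonneg _)]

lemma MulChar.mul_gaussSum_inv_eq_sum {R : Type*} [CommRing R] [IsDomain R]
    {χ : MulChar F R} (hχ : χ ≠ 1) (ψ : AddChar F R) (x : F) :
    χ x * gaussSum χ⁻¹ ψ = ∑ b, χ⁻¹ b * ψ (b * x) := by
  rcases eq_or_ne x 0 with rfl | hx
  · simp [MulChar.sum_eq_zero_of_ne_one (inv_ne_one.mpr hχ)]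
  · calc χ x * gaussSum χ⁻¹ ψ = gaussSum χ⁻¹ (ψ.mulShift x) := by
          simpa using (gaussSum_mulShift_eq χ⁻¹ ψ (Units.mk0 x hx)).symm
      _ = ∑ b, χ⁻¹ b * ψ (b * x) := by simp only [gaussSum, AddChar.mulShift_apply, mul_comm x]

lemma sum_sum_addSubgroup_mul_eq_card {ψ : AddChar F ℂ} (hψ : ψ.IsPrimitive)
    (V : AddSubgroup F) : ∑ b : F, ∑ v : V, ψ (b * v) = Fintype.card F := by
  rw [Finset.sum_comm]
  simp_rw [AddChar.sum_mulShift _ hψ]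
  simp

theorem norm_sum_mulChar_addSubgroup_coset_le_sqrt_card {χ : MulChar F ℂ} (hχ : χ ≠ 1)
    (V : AddSubgroup F) (u : F) : ‖∑ v : V, χ (v + u)‖ ≤ √(Fintype.card F) := by
  set ψ := AddChar.FiniteField.primitiveChar_to_Complex F
  have hψ : ψ.IsPrimitive := AddChar.FiniteField.primitiveChar_to_Complex_isPrimitive F
  set c : F → ℂ := fun b => ∑ v : V, ψ (b * v)
  have hexpand : gaussSum χ⁻¹ ψ * ∑ v : V, χ (v + u) = ∑ b, χ⁻¹ b * ψ (b * u) * c b := by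
    simp_rw [c, Finset.mul_sum, mul_comm (gaussSum _ _), χ.mul_gaussSum_inv_eq_sum hχ, mul_add,
      AddChar.map_add_eq_mul]
    rw [Finset.sum_comm]
    exact Finset.sum_congr rfl fun b _ => Finset.sum_congr rfl fun v _ => by ring
  -- each `c b` is a natural number, so its norm is itself
  have hc : ∑ b, ‖c b‖ = Fintype.card F := Complex.ofReal_injective <| by
    push_cast
    simp only [c, ← AddChar.mulShift_apply, AddChar.ofReal_norm_sum_addSubgroup]
    exact sum_sum_addSubgroup_mul_eq_card hψ V
  have hG : ‖gaussSum χ⁻¹ ψ‖ = √(Fintype.card F) :=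
    norm_gaussSum_eq_sqrt_card (inv_ne_one.mpr hχ) hψ
  refine le_of_mul_le_mul_left ?_ (Real.sqrt_pos.mpr (Nat.cast_pos.mpr (Fintype.card_pos (α := F))))
  calc √(Fintype.card F) * ‖∑ v : V, χ (v + u)‖
      = ‖∑ b, χ⁻¹ b * ψ (b * u) * c b‖ := by rw [← hG, ← norm_mul, hexpand]
    _ ≤ ∑ b, ‖c b‖ := norm_sum_le_of_le _ fun b _ => by
        rw [norm_mul, norm_mul, AddChar.norm_apply, mul_one]
        exact mul_le_of_le_one_left (norm_nonneg _) (χ⁻¹.norm_apply_le_one b)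
    _ = √(Fintype.card F) * √(Fintype.card F) := by
        rw [hc, Real.mul_self_sqrt (Nat.cast_nonneg _)]

end FiniteField

theorem norm_sum_mulChar_le_of_isAffineSubspaceOfDim {K F : Type*} [Field K] [Field F]
    [Algebra K F] [Fintype K] [Fintype F] {χ : MulChar F ℂ} (hχ : χ ≠ 1) {m : ℕ} {A : Set F}
    (hA : IsAffineSubspaceOfDim K m A) :
    ‖∑ x ∈ Finset.univ.filter (· ∈ A), χ x‖
      ≤ (Fintype.card K : ℝ) ^ min (m : ℝ) (Module.finrank K F / 2) := by
  obtain ⟨u, V, hV, rfl⟩ := hA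
  have hq : (1 : ℝ) ≤ Fintype.card K := Nat.one_le_cast.mpr Fintype.card_pos
  have hsum := Finset.sum_filter_sub_mem_eq_sum_addSubgroup V.toAddSubgroup u χ
  simp only [Submodule.mem_toAddSubgroup] at hsum
  simp only [Set.mem_ofPred_eq, hsum]
  rw [(Real.monotone_rpow_of_base_ge_one hq).map_min, le_min_iff]
  constructor
  · calc ‖∑ v : V.toAddSubgroup, χ (v + u)‖ ≤ Fintype.card V.toAddSubgroup := by
          simpa using norm_sum_le_of_le Finset.univ
            fun (v : V.toAddSubgroup) _ => χ.norm_apply_le_one (v + u)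
      _ = (Fintype.card K : ℝ) ^ (m : ℝ) := by
          rw [Real.rpow_natCast, ← hV, ← Nat.cast_pow, ← Module.card_eq_pow_finrank]
          rfl
  · calc ‖∑ v : V.toAddSubgroup, χ (v + u)‖ ≤ √(Fintype.card F) :=
          norm_sum_mulChar_addSubgroup_coset_le_sqrt_card hχ _ u
      _ = (Fintype.card K : ℝ) ^ ((Module.finrank K F : ℝ) / 2) := by
          rw [Module.card_eq_pow_finrank (K := K), Real.sqrt_eq_rpow, Nat.cast_pow,
            ← Real.rpow_natCast, ← Real.rpow_mul (by positivity), mul_one_div]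

theorem charSum_avoiding_bound_general (q n : ℕ)
    (K F : Type) [Field K] [Field F] [Algebra K F] [Fintype K] [Fintype F]
    (hK : Fintype.card K = q) (hd : Module.finrank K F = n)
    (A : Fin n → Set F) (hgen : InGeneralPosition K n A)
    (χ : MulChar F ℂ) (hχ : χ ≠ 1) :
    ‖∑ x ∈ Finset.univ.filter (· ∈ ⋂ i, (A i)ᶜ), χ x‖
      ≤ deltaQN q n := by
  set S : Fin n → Finset F := fun i => Finset.univ.filter (· ∈ A i)
  have hinf (t : Finset (Fin n)) : t.inf S = Finset.univ.filter (· ∈ ⋂ i ∈ t, A i) := by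
    ext x; simp [S, Finset.mem_inf]
  have hcompl : Finset.univ.filter (· ∈ ⋂ i, (A i)ᶜ) = Finset.univ.inf fun i => (S i)ᶜ := by
    ext x; simp [S, Finset.mem_inf]
  have hempty : ∑ x ∈ (∅ : Finset (Fin n)).inf S, χ x = 0 := by
    simpa using χ.sum_eq_zero_of_ne_one hχ
  have hcount := Finset.sum_powerset_filter_nonempty_apply_card_sub (Finset.univ : Finset (Fin n))
    fun i => (q : ℝ) ^ min (i : ℝ) (n / 2)
  rw [Finset.card_univ, Fintype.card_fin] at hcount
  rw [hcompl, Finset.inclusion_exclusion_sum_inf_compl]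
  calc _ ≤ ∑ t ∈ Finset.univ.powerset, ‖∑ x ∈ t.inf S, χ x‖ :=
        norm_sum_le_of_le _ fun t _ => by simp
    _ = ∑ t ∈ Finset.univ.powerset with t.Nonempty, ‖∑ x ∈ t.inf S, χ x‖ :=
        (Finset.sum_filter_of_ne fun t _ ht => Finset.nonempty_iff_ne_empty.mpr <| by
          rintro rfl; exact ht (by rw [hempty, norm_zero])).symm
    _ ≤ ∑ t ∈ Finset.univ.powerset with t.Nonempty,
          (q : ℝ) ^ min ((n - t.card : ℕ) : ℝ) ((n : ℝ) / 2) :=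
        Finset.sum_le_sum fun t ht => by
          have h := norm_sum_mulChar_le_of_isAffineSubspaceOfDim hχ
            (hgen t (Finset.mem_filter.mp ht).2)
          rwa [hK, hd, ← hinf] at h
    _ = deltaQN q n := by
        simp only [hcount, deltaQN, nsmul_eq_mul]

theorem charSum_avoiding_bound (q n : ℕ) (hq : IsPrimePow q) (hn : 2 ≤ n)
    (K F : Type) [Field K] [Field F] [Algebra K F] [Fintype K] [Fintype F]
    (hK : Fintype.card K = q) (hd : Module.finrank K F = n)
    (A : Fin n → Set F) (hgen : InGeneralPosition K n A)
    (χ : MulChar F ℂ) (hχ : χ ≠ 1) :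
    ‖∑ x ∈ Finset.univ.filter (· ∈ ⋂ i, (A i)ᶜ), χ x‖
      ≤ deltaQN q n :=
  charSum_avoiding_bound_general q n K F hK hd A hgen χ hχ
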